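/- arXiv:1305.0808 — 2 statements merged into one kernel-verified Lean document; each statement's English description precedes it below -/
import Mathlib

section
/- Fix d ≥ 2 and an integer r with r ∉ {1,2,4}, and let X_r ⊆ (ℤ/rℤ)^{ℤ^d} be the set of configurations x with x_n − x_m = ±1 (mod r) whenever ‖n−m‖₁ = 1. Then: (1) if x,y ∈ X_r agree outside a finite set, there exist height functions x̂, ŷ with x̂ ≡ x, ŷ ≡ y (mod r) pointwise and x̂_n = ŷ_n for all but finitely many n; (2) for any two height functions x̂, ŷ which agree at all but finitely many sites, x̂_n − ŷ_n is even for every n ∈ ℤ^d; (3) if x,y ∈ X_r satisfy x_n = y_n for all n ≠ n₀ and x_{n₀} ≠ y_{n₀}, then there exist height functions x̂, ŷ with x̂ ≡ x, ŷ ≡ y (mod r) pointwise, |x̂_{n₀} − ŷ_{n₀}| = 2, and x̂_n = ŷ_n for all n ≠ n₀. -/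
open scoped BigOperators

/-- Sites of the standard Cayley graph of `ℤ^d`. -/
abbrev Site (d : ℕ) := Fin d → ℤ

/-- Adjacency in the standard Cayley graph of `ℤ^d`: `‖n - m‖₁ = 1`. -/
def adjacent {d : ℕ} (n m : Site d) : Prop :=
  (∑ i, |n i - m i|) = 1

/-- The nearest neighbor shift of finite type `X_r`. -/
def Xr (d r : ℕ) : Set (Site d → ZMod r) :=
  {x | ∀ n m : Site d, adjacent n m → x n - x m = 1 ∨ x n - x m = -1}

/-- A height function on `ℤ^d`. -/
def IsHeightFn {d : ℕ} (h : Site d → ℤ) : Prop :=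
  ∀ n m : Site d, adjacent n m → |h n - h m| = 1

/-- `h` is a height-function lift of the configuration `x ∈ (ℤ/rℤ)^{ℤ^d}`. -/
def LiftsTo {d r : ℕ} (h : Site d → ℤ) (x : Site d → ZMod r) : Prop :=
  IsHeightFn h ∧ ∀ n : Site d, ((h n : ZMod r)) = x n

/-!
Write `e k` for the `k`-th unit vector. For `x ∈ X_r` every edge `(b, b + e k)` carries a sign
`ω b k = ±1` with `ω b k ≡ x (b + e k) - x b (mod r)`. The two paths around a unit square have
increments that agree mod `r` and differ by an even integer of absolute value at most `4`; as
`4 ≠ 0` in `ZMod r` (which is exactly `r ∉ {1, 2, 4}`) they are equal. So `ω` is a closed 1-form on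
`ℤ^d`, and its potential lifts `x`.

Lifts of two configurations have equal increments along every edge on which the configurations
agree. If they differ only inside a box, normalise the lifts to agree at one site outside it; for
`d ≥ 2` every site outside the box is joined to that one by a path avoiding the box, running
through two coordinate hyperplanes, so the lifts agree off the box. The parity of a height
function flips along every edge, which gives (2). For (3), `y n₀ = 2 x m - x n₀` for every
neighbour `m` of `n₀`, so all neighbours of `n₀` have the same height under a lift of `x`, and
reflecting the height at `n₀` through that common value gives a lift of `y`.
-/

open Function

variable {d : ℕ}

section Potential

variable {G : Type*} [AddCommGroup G]

theorem exists_potential_int (f : ℤ → G) :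
    ∃ F : ℤ → G, F 0 = 0 ∧ ∀ t, F (t + 1) = F t + f t := by
  let F : ℤ → G := fun t =>
    Int.inductionOn' (motive := fun _ => G) t 0 0 (fun k _ a => a + f k) (fun k _ a => a - f (k - 1))
  refine ⟨F, Int.inductionOn'_self, fun t => ?_⟩
  rcases le_or_gt 0 t with ht | ht
  · exact Int.inductionOn'_add_one ht
  · have h := Int.inductionOn'_sub_one (motive := fun _ => G) (zero := 0)
      (succ := fun k _ a => a + f k) (pred := fun k _ a => a - f (k - 1)) (show t + 1 ≤ 0 by omega)
    simp only [add_sub_cancel_right] at h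
    change F t = F (t + 1) - f t at h
    rw [h, sub_add_cancel]

theorem Fin.cons_add_single_zero (t : ℤ) (b : Fin d → ℤ) :
    (Fin.cons t b : Fin (d + 1) → ℤ) + Pi.single 0 1 = Fin.cons (t + 1) b := by
  ext j
  cases j using Fin.cases <;> simp [Fin.succ_ne_zero]

theorem Fin.cons_add_single_succ (t : ℤ) (b : Fin d → ℤ) (k : Fin d) :
    (Fin.cons t b : Fin (d + 1) → ℤ) + Pi.single k.succ 1 = Fin.cons t (b + Pi.single k 1) := by
  ext j
  cases j using Fin.cases <;> simp [Pi.single_apply, (Fin.succ_ne_zero _).symm]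

theorem exists_potential_of_closed (ω : Site d → Fin d → G)
    (hω : ∀ b i k, ω b i + ω (b + Pi.single i 1) k = ω b k + ω (b + Pi.single k 1) i) :
    ∃ h : Site d → G, ∀ b k, h (b + Pi.single k 1) = h b + ω b k := by
  induction d with
  | zero => exact ⟨0, fun _ k => k.elim0⟩
  | succ d ih =>
    obtain ⟨h, hh⟩ := ih (fun b k => ω (Fin.cons 0 b) k.succ) fun b i k => by
      simpa only [Fin.cons_add_single_succ] using hω (Fin.cons 0 b) i.succ k.succ
    -- extend the potential `h` of the restriction to the hyperplane `p 0 = 0` along coordinate `0`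
    choose F hF0 hF using fun b : Site d => exists_potential_int fun t => ω (Fin.cons t b) 0
    have hF_succ : ∀ b k t, F (b + Pi.single k 1) t
        = F b t + ω (Fin.cons t b) k.succ - ω (Fin.cons 0 b) k.succ := by
      intro b k t
      induction t using Int.induction_on with
      | zero => simp [hF0]
      | succ t ih =>
        have hsq := hω (Fin.cons t b) 0 k.succ
        simp only [Fin.cons_add_single_zero, Fin.cons_add_single_succ] at hsq
        rw [hF, hF, ih]
        linear_combination (norm := module) -hsq
      | pred t ih =>
        have hsq := hω (Fin.cons (-t - 1) b) 0 k.succ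
        have hb := hF b (-t - 1)
        have hbk := hF (b + Pi.single k 1) (-t - 1)
        simp only [Fin.cons_add_single_zero, Fin.cons_add_single_succ, sub_add_cancel] at hsq hb hbk
        rw [hbk, hb] at ih
        linear_combination (norm := module) ih + hsq
    refine ⟨fun p => h (Fin.tail p) + F (Fin.tail p) (p 0), fun p k => ?_⟩
    obtain ⟨t, b, rfl⟩ : ∃ t b, p = Fin.cons t b := ⟨p 0, Fin.tail p, (Fin.cons_self_tail p).symm⟩
    cases k using Fin.cases with
    | zero => simp [Fin.cons_add_single_zero, hF, add_assoc]
    | succ k =>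
      simp only [Fin.cons_add_single_succ, Fin.tail_cons, Fin.cons_zero, hh, hF_succ]
      abel

end Potential

theorem adjacent_comm {n m : Site d} : adjacent n m ↔ adjacent m n := by
  simp only [adjacent, abs_sub_comm (n _)]

theorem adjacent_add_single (b : Site d) (k : Fin d) : adjacent (b + Pi.single k 1) b := by
  simp only [adjacent, Pi.add_apply, add_sub_cancel_left, Pi.single_apply, apply_ite abs]
  simp

theorem ne_of_adjacent {n m : Site d} (h : adjacent n m) : n ≠ m := by
  rintro rfl
  simp [adjacent] at h

theorem exists_eq_add_single_of_adjacent {n m : Site d} (h : adjacent n m) :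
    ∃ k, n = m + Pi.single k 1 ∨ m = n + Pi.single k 1 := by
  obtain ⟨k, hk⟩ : ∃ k, n k ≠ m k := not_forall.mp fun hnm => ne_of_adjacent h (funext hnm)
  have hsplit := Finset.add_sum_erase Finset.univ (fun j => |n j - m j|) (Finset.mem_univ k)
  have hrest := Finset.sum_nonneg fun j (_ : j ∈ Finset.univ.erase k) => abs_nonneg (n j - m j)
  obtain ⟨hk1, hzero⟩ : |n k - m k| = 1 ∧ ∑ j ∈ Finset.univ.erase k, |n j - m j| = 0 := by
    have := abs_pos.mpr (sub_ne_zero.mpr hk)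
    unfold adjacent at h
    omega
  have hnm : n = m + Pi.single k (n k - m k) := by
    ext j
    by_cases hj : j = k
    · subst hj; simp
    · have := (Finset.sum_eq_zero_iff_of_nonneg fun j _ => abs_nonneg (n j - m j)).mp hzero j
        (Finset.mem_erase.mpr ⟨hj, Finset.mem_univ j⟩)
      simp [hj, sub_eq_zero.mp (abs_eq_zero.mp this)]
  rcases abs_eq zero_le_one |>.mp hk1 with hk1 | hk1 <;> rw [hk1] at hnm
  · exact ⟨k, .inl hnm⟩
  · refine ⟨k, .inr ?_⟩
    rw [hnm, add_assoc, ← Pi.single_add, neg_add_cancel, Pi.single_zero, add_zero]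

theorem isHeightFn_of_add_single {h : Site d → ℤ}
    (hh : ∀ b k, |h (b + Pi.single k 1) - h b| = 1) : IsHeightFn h := by
  intro n m hnm
  obtain ⟨k, rfl | rfl⟩ := exists_eq_add_single_of_adjacent hnm
  · exact hh m k
  · rw [abs_sub_comm]; exact hh n k

theorem update_add_single_self (b : Site d) (j : Fin d) (u : ℤ) :
    update b j u + Pi.single j 1 = update b j (u + 1) := by
  ext l
  by_cases hl : l = j
  · subst hl; simp
  · simp [hl]

theorem apply_update_eq_apply_update {α : Type*} {g : Site d → α} {b : Site d} {j : Fin d}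
    (hg : ∀ u, g (update b j u + Pi.single j 1) = g (update b j u)) (s t : ℤ) :
    g (update b j s) = g (update b j t) := by
  suffices key : ∀ s, g (update b j s) = g (update b j 0) by rw [key s, key t]
  intro s
  induction s using Int.induction_on with
  | zero => rfl
  | succ n ih => rw [← update_add_single_self, hg, ih]
  | pred n ih => rw [← ih, ← hg, update_add_single_self, sub_add_cancel]

theorem apply_eq_of_forall_add_single {α : Type*} {g : Site d → α} {K : Set (Fin d)}
    {p : Site d} (hg : ∀ b, (∀ j ∉ K, b j = p j) → ∀ k ∈ K, g (b + Pi.single k 1) = g b)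
    {q : Site d} (hq : ∀ j ∉ K, q j = p j) : g q = g p := by
  classical
  suffices key : ∀ s : Finset (Fin d), ∀ q : Site d, (∀ j ∉ K, q j = p j) →
      (∀ j ∉ s, q j = p j) → g q = g p from
    key (Finset.univ.filter fun j => q j ≠ p j) q hq fun j hj => by simpa using hj
  intro s
  induction s using Finset.induction_on with
  | empty => exact fun q _ hq => congrArg g (funext fun j => hq j (Finset.notMem_empty j))
  | insert j s _ ih =>
    intro q hqK hqs
    by_cases hjK : j ∈ K
    · have hline : ∀ u, g (update q j u + Pi.single j 1) = g (update q j u) := fun u =>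
        hg _ (fun l hl => by rw [update_of_ne (ne_of_mem_of_not_mem hjK hl).symm, hqK l hl]) j hjK
      rw [← update_eq_self j q, apply_update_eq_apply_update hline (q j) (p j)]
      refine ih _ (fun l hl => ?_) fun l hl => ?_
      · rw [update_of_ne (ne_of_mem_of_not_mem hjK hl).symm, hqK l hl]
      · by_cases hlj : l = j
        · subst hlj; simp
        · rw [update_of_ne hlj]; exact hqs l (by simp [hlj, hl])
    · exact ih q hqK fun l hl => by
        by_cases hlj : l = j
        · subst hlj; exact hqK l hjK
        · exact hqs l (by simp [hlj, hl])

variable {r : ℕ}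

theorem ZMod.four_ne_zero_iff : (4 : ZMod r) ≠ 0 ↔ r ≠ 1 ∧ r ≠ 2 ∧ r ≠ 4 := by
  rw [ne_eq, show (4 : ZMod r) = ((4 : ℕ) : ZMod r) by norm_cast, ZMod.natCast_eq_zero_iff]
  constructor
  · rintro h
    refine ⟨?_, ?_, ?_⟩ <;> rintro rfl <;> norm_num at h
  · rintro ⟨h1, h2, h4⟩ hdvd
    have := Nat.le_of_dvd (by norm_num) hdvd
    interval_cases r <;> simp_all

theorem Int.eq_of_cast_eq_of_two_dvd_sub (h4 : (4 : ZMod r) ≠ 0) {a b : ℤ} (hdvd : 2 ∣ a - b)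
    (hle : |a - b| ≤ 4) (h : (a : ZMod r) = b) : a = b := by
  obtain ⟨c, hc⟩ := hdvd
  have hcast : (2 * c : ZMod r) = 0 := by
    rw [← sub_eq_zero.mpr h, ← Int.cast_sub, hc]; push_cast; ring
  rw [hc] at hle
  obtain ⟨hlo, hhi⟩ := abs_le.mp hle
  have h2 : (2 : ZMod r) ≠ 0 := fun h2 => h4 (by linear_combination (2 : ZMod r) * h2)
  obtain rfl | rfl | rfl | rfl | rfl : c = -2 ∨ c = -1 ∨ c = 0 ∨ c = 1 ∨ c = 2 := by omega
  · exact absurd (by linear_combination -hcast) h4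
  · exact absurd (by linear_combination -hcast) h2
  · omega
  · exact absurd (by linear_combination hcast) h2
  · exact absurd (by linear_combination hcast) h4

theorem exists_liftsTo (h4 : (4 : ZMod r) ≠ 0) {x : Site d → ZMod r} (hx : x ∈ Xr d r) :
    ∃ h, LiftsTo h x := by
  have hstep : ∀ b k, ∃ s : ℤ, (s = 1 ∨ s = -1) ∧ (s : ZMod r) = x (b + Pi.single k 1) - x b :=
    fun b k => by
      rcases hx _ _ (adjacent_add_single b k) with h | h
      · exact ⟨1, .inl rfl, by rw [h, Int.cast_one]⟩
      · exact ⟨-1, .inr rfl, by rw [h, Int.cast_neg, Int.cast_one]⟩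
  choose ω hω_unit hω_cast using hstep
  obtain ⟨h, hh⟩ := exists_potential_of_closed ω fun b i k => by
    have := hω_unit b i; have := hω_unit (b + Pi.single i 1) k
    have := hω_unit b k; have := hω_unit (b + Pi.single k 1) i
    refine Int.eq_of_cast_eq_of_two_dvd_sub h4 (by omega) (abs_le.mpr ⟨by omega, by omega⟩) ?_
    push_cast
    rw [hω_cast, hω_cast, hω_cast, hω_cast, add_right_comm b]
    ring
  have hres : ∀ n, (h n : ZMod r) - x n = (h 0 : ZMod r) - x 0 := fun n =>
    apply_eq_of_forall_add_single (g := fun n => (h n : ZMod r) - x n) (K := Set.univ) (fun b _ k _ => by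
      simp only [hh, Int.cast_add, hω_cast]; ring) (by simp)
  obtain ⟨c, hc⟩ := ZMod.intCast_surjective ((h 0 : ZMod r) - x 0)
  refine ⟨fun n => h n - c, isHeightFn_of_add_single fun b k => ?_, fun n => ?_⟩
  · rw [hh]
    rcases hω_unit b k with hs | hs <;> simp [hs]
  · rw [Int.cast_sub, hc, ← hres n]
    ring

theorem LiftsTo.add_const {h : Site d → ℤ} {x : Site d → ZMod r} (hh : LiftsTo h x) {c : ℤ}
    (hc : (c : ZMod r) = 0) : LiftsTo (fun n => h n + c) x :=
  ⟨fun n m hnm => by simpa using hh.1 n m hnm, fun n => by simp [hc, hh.2 n]⟩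

theorem LiftsTo.sub_eq_sub (h4 : (4 : ZMod r) ≠ 0) {f g : Site d → ℤ} {x y : Site d → ZMod r}
    (hf : LiftsTo f x) (hg : LiftsTo g y) {n m : Site d} (hnm : adjacent n m)
    (hn : x n = y n) (hm : x m = y m) : f n - f m = g n - g m := by
  have hf1 := abs_eq zero_le_one |>.mp (hf.1 n m hnm)
  have hg1 := abs_eq zero_le_one |>.mp (hg.1 n m hnm)
  refine Int.eq_of_cast_eq_of_two_dvd_sub h4 (by omega) (abs_le.mpr ⟨by omega, by omega⟩) ?_
  push_cast
  rw [hf.2, hf.2, hg.2, hg.2, hn, hm]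

theorem notMem_Icc_of_apply {a b n : Site d} {j : Fin d} (hj : n j ∉ Set.Icc (a j) (b j)) :
    n ∉ Set.Icc a b :=
  fun hn => hj ⟨hn.1 j, hn.2 j⟩

theorem apply_eq_of_notMem_Icc {α : Type*} (hd : 2 ≤ d) {g : Site d → α} {a b : Site d}
    (hg : ∀ n k, n ∉ Set.Icc a b → n + Pi.single k 1 ∉ Set.Icc a b → g (n + Pi.single k 1) = g n)
    {p : Site d} (hp : p ∉ Set.Icc a b) : g p = g (b + 1) := by
  have : Nontrivial (Fin d) := Fin.nontrivial_iff_two_le.mpr hd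
  obtain ⟨i, hi⟩ : ∃ i, p i ∉ Set.Icc (a i) (b i) :=
    not_forall.mp fun h => hp ⟨fun j => (h j).1, fun j => (h j).2⟩
  obtain ⟨l, hl⟩ := exists_ne i
  have hplane : ∀ j t, t ∉ Set.Icc (a j) (b j) → ∀ n, n j = t → ∀ m, m j = t → g n = g m :=
    fun j t ht n hn m hm => apply_eq_of_forall_add_single (K := {j}ᶜ) (fun c hc k hk => by
        have hcj : c j = t := by rw [hc j (by simp), hm]
        refine hg c k (notMem_Icc_of_apply (j := j) (by rwa [hcj])) (notMem_Icc_of_apply (j := j) ?_)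
        rwa [Pi.add_apply, Pi.single_eq_of_ne' (by simpa using hk), add_zero, hcj])
      (by simpa [hm] using hn)
  have hbl : (b + 1) l ∉ Set.Icc (a l) (b l) := fun h => (lt_add_one (b l)).not_ge h.2
  calc g p = g (update (b + 1) i (p i)) := hplane i (p i) hi _ rfl _ (by simp)
    _ = g (b + 1) := hplane l _ hbl _ (by simp [hl]) _ rfl

theorem exists_liftsTo_of_finite_ne (h4 : (4 : ZMod r) ≠ 0) (hd : 2 ≤ d) {x y : Site d → ZMod r}
    (hx : x ∈ Xr d r) (hy : y ∈ Xr d r) (hfin : {n | x n ≠ y n}.Finite) :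
    ∃ f g : Site d → ℤ, LiftsTo f x ∧ LiftsTo g y ∧ {n | f n ≠ g n}.Finite := by
  obtain ⟨f, hf⟩ := exists_liftsTo h4 hx
  obtain ⟨g, hg⟩ := exists_liftsTo h4 hy
  obtain ⟨a, ha⟩ := hfin.bddBelow
  obtain ⟨b, hb⟩ := hfin.bddAbove
  have hoff : ∀ n ∉ Set.Icc a b, x n = y n := fun n hn => not_not.mp fun hne => hn ⟨ha hne, hb hne⟩
  have hc : b + 1 ∉ Set.Icc a b :=
    notMem_Icc_of_apply (j := ⟨0, by omega⟩) fun h => (lt_add_one _).not_ge h.2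
  have hg' : LiftsTo (fun n => g n + (f (b + 1) - g (b + 1))) y :=
    hg.add_const (by push_cast; rw [hf.2, hg.2, hoff _ hc, sub_self])
  refine ⟨f, _, hf, hg', (Set.finite_Icc a b).subset fun n hn => ?_⟩
  by_contra hn'
  have hconst := apply_eq_of_notMem_Icc hd (g := fun n => f n - (g n + (f (b + 1) - g (b + 1))))
    (fun m k hm hmk => by
      have := hf.sub_eq_sub h4 hg' (adjacent_add_single m k) (hoff _ hmk) (hoff _ hm)
      linarith) hn'
  exact hn (by linarith)

theorem IsHeightFn.two_dvd_sub (hd : 0 < d) {f g : Site d → ℤ} (hf : IsHeightFn f)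
    (hg : IsHeightFn g) (hfin : {n | f n ≠ g n}.Finite) (n : Site d) : 2 ∣ f n - g n := by
  have : Nonempty (Fin d) := ⟨⟨0, hd⟩⟩
  obtain ⟨p, hp⟩ := hfin.exists_notMem
  have hpar := apply_eq_of_forall_add_single (g := fun n => (f n - g n) % 2) (K := Set.univ)
    (p := p) (fun b _ k _ => by
      have := abs_eq zero_le_one |>.mp (hf _ _ (adjacent_add_single b k))
      have := abs_eq zero_le_one |>.mp (hg _ _ (adjacent_add_single b k))
      omega) (q := n) (by simp)
  simp only [Set.mem_ofPred_eq, not_not] at hp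
  omega

theorem exists_liftsTo_flip (h4 : (4 : ZMod r) ≠ 0) (hd : 0 < d) {x y : Site d → ZMod r}
    (hx : x ∈ Xr d r) (hy : y ∈ Xr d r) {n₀ : Site d} (hagree : ∀ n, n ≠ n₀ → x n = y n)
    (hne : x n₀ ≠ y n₀) {f : Site d → ℤ} (hf : LiftsTo f x) :
    ∃ g : Site d → ℤ, LiftsTo g y ∧ |f n₀ - g n₀| = 2 ∧ ∀ n, n ≠ n₀ → f n = g n := by
  have hrefl : ∀ m, adjacent m n₀ → y n₀ = 2 * x m - x n₀ := by
    intro m hm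
    have hym := hy n₀ m (adjacent_comm.mp hm)
    rw [← hagree m (ne_of_adjacent hm)] at hym
    rcases hx n₀ m (adjacent_comm.mp hm) with hxm | hxm <;> rcases hym with hym | hym
    · exact absurd (by linear_combination hxm - hym) hne
    · linear_combination hym + hxm
    · linear_combination hym + hxm
    · exact absurd (by linear_combination hxm - hym) hne
  obtain ⟨m₀, hm₀⟩ : ∃ m₀, adjacent m₀ n₀ := ⟨_, adjacent_add_single n₀ ⟨0, hd⟩⟩
  have hfm₀ := abs_eq zero_le_one |>.mp (hf.1 _ _ hm₀)
  have hnbr : ∀ m, adjacent m n₀ → f m = f m₀ := by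
    intro m hm
    have hfm := abs_eq zero_le_one |>.mp (hf.1 _ _ hm)
    have := Int.eq_of_cast_eq_of_two_dvd_sub h4 (a := 2 * (f m - f n₀)) (b := 2 * (f m₀ - f n₀))
      (by omega) (abs_le.mpr ⟨by omega, by omega⟩) (by
        push_cast
        rw [hf.2, hf.2, hf.2]
        linear_combination hrefl m₀ hm₀ - hrefl m hm)
    omega
  refine ⟨update f n₀ (2 * f m₀ - f n₀), ⟨fun n m hnm => ?_, fun n => ?_⟩, ?_, ?_⟩
  · by_cases hn : n = n₀
    · subst hn
      rw [update_self, update_of_ne (ne_of_adjacent hnm).symm, hnbr m (adjacent_comm.mp hnm),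
        ← hf.1 m₀ n hm₀]
      ring_nf
    by_cases hm : m = n₀
    · subst hm
      rw [update_self, update_of_ne hn, hnbr n hnm, abs_sub_comm, ← hf.1 m₀ m hm₀]
      ring_nf
    rw [update_of_ne hn, update_of_ne hm]
    exact hf.1 n m hnm
  · by_cases hn : n = n₀
    · subst hn
      rw [update_self]
      push_cast
      rw [hf.2, hf.2, hrefl m₀ hm₀]
    · rw [update_of_ne hn, hf.2, hagree n hn]
  · rw [update_self, show f n₀ - (2 * f m₀ - f n₀) = 2 * (f n₀ - f m₀) by ring, abs_mul,
      abs_sub_comm, hf.1 m₀ n₀ hm₀]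
    norm_num
  · intro n hn
    rw [update_of_ne hn]

theorem homoclinic_height_lifts_general
    (d r : ℕ) (hd : 2 ≤ d) (hr1 : r ≠ 1) (hr2 : r ≠ 2) (hr4 : r ≠ 4) :
    (∀ x ∈ Xr d r, ∀ y ∈ Xr d r, {n : Site d | x n ≠ y n}.Finite →
      ∃ hx hy : Site d → ℤ, LiftsTo hx x ∧ LiftsTo hy y ∧
        {n : Site d | hx n ≠ hy n}.Finite) ∧
    (∀ hx hy : Site d → ℤ, IsHeightFn hx → IsHeightFn hy →
      {n : Site d | hx n ≠ hy n}.Finite → ∀ n : Site d, 2 ∣ (hx n - hy n)) ∧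
    (∀ x ∈ Xr d r, ∀ y ∈ Xr d r, ∀ n₀ : Site d,
      (∀ n : Site d, n ≠ n₀ → x n = y n) → x n₀ ≠ y n₀ →
      ∃ hx hy : Site d → ℤ, LiftsTo hx x ∧ LiftsTo hy y ∧
        |hx n₀ - hy n₀| = 2 ∧ ∀ n : Site d, n ≠ n₀ → hx n = hy n) := by
  have h4 : (4 : ZMod r) ≠ 0 := ZMod.four_ne_zero_iff.mpr ⟨hr1, hr2, hr4⟩
  refine ⟨fun x hx y hy hfin => exists_liftsTo_of_finite_ne h4 hd hx hy hfin,
    fun f g hf hg hfin => hf.two_dvd_sub (by omega) hg hfin,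
    fun x hx y hy n₀ hagree hne => ?_⟩
  obtain ⟨f, hf⟩ := exists_liftsTo h4 hx
  obtain ⟨g, hg, hfg₀, hfg⟩ := exists_liftsTo_flip h4 (by omega) hx hy hagree hne hf
  exact ⟨f, g, hf, hg, hfg₀, hfg⟩

/-- For `d ≥ 2` and a positive integer `r ∉ {1,2,4}`:
(1) homoclinic pairs in `X_r` admit homoclinic height-function lifts;
(2) two height functions agreeing at all but finitely many sites have even difference
everywhere;
(3) a pair in `X_r` differing at exactly one site `n₀` admits lifts agreeing off `n₀`
and differing by exactly `2` at `n₀`. -/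
theorem homoclinic_height_lifts
    (d r : ℕ) (hd : 2 ≤ d) (hr0 : 0 < r) (hr1 : r ≠ 1) (hr2 : r ≠ 2) (hr4 : r ≠ 4) :
    (∀ x ∈ Xr d r, ∀ y ∈ Xr d r, {n : Site d | x n ≠ y n}.Finite →
      ∃ hx hy : Site d → ℤ, LiftsTo hx x ∧ LiftsTo hy y ∧
        {n : Site d | hx n ≠ hy n}.Finite) ∧
    (∀ hx hy : Site d → ℤ, IsHeightFn hx → IsHeightFn hy →
      {n : Site d | hx n ≠ hy n}.Finite → ∀ n : Site d, 2 ∣ (hx n - hy n)) ∧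
    (∀ x ∈ Xr d r, ∀ y ∈ Xr d r, ∀ n₀ : Site d,
      (∀ n : Site d, n ≠ n₀ → x n = y n) → x n₀ ≠ y n₀ →
      ∃ hx hy : Site d → ℤ, LiftsTo hx x ∧ LiftsTo hy y ∧
        |hx n₀ - hy n₀| = 2 ∧ ∀ n : Site d, n ≠ n₀ → hx n = hy n) :=
  homoclinic_height_lifts_general d r hd hr1 hr2 hr4
end

section
/- Let d ≥ 2, let F ⊆ ℤ^d be a finite set, and let x̂ : ℤ^d → ℤ be a height function with Range_{∂F}(x̂) > 2. Then there exists a height function ŷ with ŷ_n = x̂_n for all n ∉ F such that Range_F(ŷ) = Range_{∂F}(ŷ) − 2 = Range_{∂F}(x̂) − 2. -/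
open scoped BigOperators

/-- The (outer) boundary of a set of sites. -/
def siteBdry {d : ℕ} (F : Set (Site d)) : Set (Site d) :=
  {m | m ∉ F ∧ ∃ n ∈ F, adjacent n m}

/-- `Range_A(h) = max_{n ∈ A} h n - min_{n ∈ A} h n`. -/
noncomputable def RangeOn {d : ℕ} (h : Site d → ℤ) (A : Set (Site d)) : ℤ :=
  sSup (h '' A) - sInf (h '' A)

/-!
Let `lo` and `hi` be the minimum and maximum of `x̂` on `∂F`. Inside `F`, replace `x̂` by its
composition with a map `ℤ → ℤ` that is the identity on `[lo + 1, hi - 1]` and folds everything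
outside back into that interval while keeping parities. This map sends unit steps to unit steps,
and moves a value adjacent to one in `[lo, hi]` to a value still adjacent to it, so the result is
again a height function and agrees with `x̂` on `∂F`. Its values on `F` lie in `[lo + 1, hi - 1]`,
and both ends are attained next to the sites of `∂F` where `x̂` is extremal.
-/

/-- Values above `hi - 1` alternate between `hi - 1` and `hi - 2`, values below `lo + 1` between
`lo + 1` and `lo + 2`. -/
def fold (lo hi t : ℤ) : ℤ :=
  if hi - 1 ≤ t then hi - 1 - (t - (hi - 1)) % 2
  else if t ≤ lo + 1 then lo + 1 + (lo + 1 - t) % 2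
  else t

section Fold

variable {lo hi s t : ℤ}

lemma abs_fold_sub_fold (hlohi : lo + 1 ≤ hi) (h : |s - t| = 1) :
    |fold lo hi s - fold lo hi t| = 1 := by
  rw [abs_eq zero_le_one] at h ⊢
  unfold fold
  split_ifs <;> omega

lemma abs_fold_sub (h : |s - t| = 1) (ht : t ∈ Set.Icc lo hi) : |fold lo hi s - t| = 1 := by
  rw [abs_eq zero_le_one] at h ⊢
  obtain ⟨htlo, hthi⟩ := ht
  unfold fold
  split_ifs <;> omega

lemma fold_mem_Icc (hlohi : lo + 3 ≤ hi) (t : ℤ) : fold lo hi t ∈ Set.Icc (lo + 1) (hi - 1) := by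
  unfold fold
  constructor <;> split_ifs <;> omega

lemma fold_eq_of_abs_sub_hi (h : |s - hi| = 1) : fold lo hi s = hi - 1 := by
  rw [abs_eq zero_le_one] at h
  unfold fold
  split_ifs <;> omega

lemma fold_eq_of_abs_sub_lo (hlohi : lo + 2 ≤ hi) (h : |s - lo| = 1) : fold lo hi s = lo + 1 := by
  rw [abs_eq zero_le_one] at h
  unfold fold
  split_ifs <;> omega

end Fold

section Sites

variable {d : ℕ}

lemma adjacent.symm {n m : Site d} (h : adjacent n m) : adjacent m n := by
  unfold adjacent at *
  simpa [abs_sub_comm] using h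

lemma finite_setOf_adjacent (n : Site d) : {m : Site d | adjacent n m}.Finite := by
  refine (Set.Finite.pi fun i => Set.finite_Icc (n i - 1) (n i + 1)).subset fun m hm i _ => ?_
  have hi : |n i - m i| ≤ 1 :=
    hm ▸ Finset.single_le_sum (f := fun j => |n j - m j|) (fun j _ => abs_nonneg _)
      (Finset.mem_univ i)
  constructor <;> linarith [abs_le.1 hi]

lemma siteBdry_finite {F : Set (Site d)} (hF : F.Finite) : (siteBdry F).Finite :=
  (hF.biUnion fun n _ => finite_setOf_adjacent n).subset
    fun _ ⟨_, _, hn, hadj⟩ => Set.mem_biUnion hn hadj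

lemma IsHeightFn.piecewise {h : Site d → ℤ} (hh : IsHeightFn h) {φ : ℤ → ℤ}
    (hφ : ∀ s t, |s - t| = 1 → |φ s - φ t| = 1) (F : Set (Site d)) [DecidablePred (· ∈ F)]
    (hbdry : ∀ s, ∀ b ∈ siteBdry F, |s - h b| = 1 → |φ s - h b| = 1) :
    IsHeightFn (F.piecewise (φ ∘ h) h) := by
  intro n m hadj
  by_cases hn : n ∈ F <;> by_cases hm : m ∈ F <;>
    simp only [Set.piecewise, Function.comp_apply, hn, hm, if_true, if_false]
  · exact hφ _ _ (hh n m hadj)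
  · exact hbdry _ m ⟨hm, n, hn, hadj⟩ (hh n m hadj)
  · rw [abs_sub_comm]
    exact hbdry _ n ⟨hn, m, hm, hadj.symm⟩ (by rw [abs_sub_comm]; exact hh n m hadj)
  · exact hh n m hadj

lemma nonempty_of_rangeOn_ne_zero {h : Site d → ℤ} {A : Set (Site d)} (hA : RangeOn h A ≠ 0) :
    A.Nonempty := by
  contrapose! hA
  simp [RangeOn, hA]

lemma rangeOn_congr {h h' : Site d → ℤ} {A : Set (Site d)} (hhh' : Set.EqOn h h' A) :
    RangeOn h A = RangeOn h' A := by
  rw [RangeOn, RangeOn, Set.image_congr hhh']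

lemma rangeOn_eq_of_bounds {h : Site d → ℤ} {A : Set (Site d)} {a b : ℤ}
    (hlo : ∀ n ∈ A, a ≤ h n) (hhi : ∀ n ∈ A, h n ≤ b)
    (ha : ∃ n ∈ A, h n = a) (hb : ∃ n ∈ A, h n = b) : RangeOn h A = b - a := by
  obtain ⟨na, hna, rfl⟩ := ha
  obtain ⟨nb, hnb, rfl⟩ := hb
  have hmin : IsLeast (h '' A) (h na) := ⟨⟨na, hna, rfl⟩, Set.forall_mem_image.2 hlo⟩
  have hmax : IsGreatest (h '' A) (h nb) := ⟨⟨nb, hnb, rfl⟩, Set.forall_mem_image.2 hhi⟩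
  rw [RangeOn, hmin.csInf_eq, hmax.csSup_eq]

end Sites

theorem steep_to_flat_general
    (d : ℕ) (F : Set (Site d)) (hF : F.Finite)
    (xh : Site d → ℤ) (hx : IsHeightFn xh)
    (hrange : 2 < RangeOn xh (siteBdry F)) :
    ∃ yh : Site d → ℤ, IsHeightFn yh ∧ (∀ n ∉ F, yh n = xh n) ∧
      RangeOn yh F = RangeOn yh (siteBdry F) - 2 ∧
      RangeOn yh (siteBdry F) = RangeOn xh (siteBdry F) := by
  classical
  have hbdry := siteBdry_finite hF
  have hne := nonempty_of_rangeOn_ne_zero (by omega : RangeOn xh (siteBdry F) ≠ 0)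
  obtain ⟨bhi, hbhi, hhi⟩ := (siteBdry F).exists_max_image xh hbdry hne
  obtain ⟨blo, hblo, hlo⟩ := (siteBdry F).exists_min_image xh hbdry hne
  have hxrange : RangeOn xh (siteBdry F) = xh bhi - xh blo :=
    rangeOn_eq_of_bounds hlo hhi ⟨blo, hblo, rfl⟩ ⟨bhi, hbhi, rfl⟩
  have hlohi : xh blo + 3 ≤ xh bhi := by omega
  set yh := F.piecewise (fold (xh blo) (xh bhi) ∘ xh) xh
  have hoff : ∀ n ∉ F, yh n = xh n := fun n hn => F.piecewise_eq_of_notMem _ _ hn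
  have hyrange : RangeOn yh (siteBdry F) = RangeOn xh (siteBdry F) :=
    rangeOn_congr fun n hn => hoff n hn.1
  have hyheight : IsHeightFn yh :=
    hx.piecewise (fun _ _ => abs_fold_sub_fold (by omega)) F
      fun _ b hb h => abs_fold_sub h ⟨hlo b hb, hhi b hb⟩
  have hyF : ∀ n ∈ F, yh n = fold (xh blo) (xh bhi) (xh n) := fun n hn =>
    F.piecewise_eq_of_mem _ _ hn
  obtain ⟨nhi, hnhi, hadjhi⟩ := hbhi.2
  obtain ⟨nlo, hnlo, hadjlo⟩ := hblo.2
  have hyFrange : RangeOn yh F = (xh bhi - 1) - (xh blo + 1) :=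
    rangeOn_eq_of_bounds (fun n hn => hyF n hn ▸ (fold_mem_Icc hlohi _).1)
      (fun n hn => hyF n hn ▸ (fold_mem_Icc hlohi _).2)
      ⟨nlo, hnlo, (hyF nlo hnlo).trans (fold_eq_of_abs_sub_lo (by omega) (hx _ _ hadjlo))⟩
      ⟨nhi, hnhi, (hyF nhi hnhi).trans (fold_eq_of_abs_sub_hi (hx _ _ hadjhi))⟩
  exact ⟨yh, hyheight, hoff, by omega, hyrange⟩

/-- For `d ≥ 2`, a finite `F ⊆ ℤ^d` and a height function `x̂` with
`Range_{∂F}(x̂) > 2`, there is a height function `ŷ` agreeing with `x̂` off `F` such that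
`Range_F(ŷ) = Range_{∂F}(ŷ) - 2 = Range_{∂F}(x̂) - 2`. -/
theorem steep_to_flat
    (d : ℕ) (hd : 2 ≤ d) (F : Set (Site d)) (hF : F.Finite)
    (xh : Site d → ℤ) (hx : IsHeightFn xh)
    (hrange : 2 < RangeOn xh (siteBdry F)) :
    ∃ yh : Site d → ℤ, IsHeightFn yh ∧ (∀ n ∉ F, yh n = xh n) ∧
      RangeOn yh F = RangeOn yh (siteBdry F) - 2 ∧
      RangeOn yh (siteBdry F) = RangeOn xh (siteBdry F) :=
  steep_to_flat_general d F hF xh hx hrange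
end
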